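/- Let n ≥ 2 and work in the braid monoid B_n^+ (the monoid presented by generators σ_1, …, σ_{n−1} and the braid relations). Let i, j be indices with |i − j| = 1 and let w be an element of B_n^+. If σ_j left-divides σ_i · σ_j · w (i.e., σ_i · σ_j · w = σ_j · w′ for some w′ ∈ B_n^+), then σ_i left-divides w (i.e., w = σ_i · w″ for some w″ ∈ B_n^+). -/

import Mathlib

/-- The braid relations on the free monoid on `m` generators:
`σᵢσⱼ = σⱼσᵢ` for `|i - j| ≥ 2` and `σᵢσⱼσᵢ = σⱼσᵢσⱼ` for `j = i + 1`. -/
def braidMonoidRels (m : ℕ) : FreeMonoid (Fin m) → FreeMonoid (Fin m) → Prop :=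
  fun a b => ∃ i j : Fin m,
    ((i : ℕ) + 2 ≤ (j : ℕ) ∧ a = .of i * .of j ∧ b = .of j * .of i) ∨
    ((j : ℕ) = (i : ℕ) + 1 ∧ a = .of i * .of j * .of i ∧ b = .of j * .of i * .of j)

/-- The braid monoid `B_n⁺`, presented over `Fin (n - 1)`. -/
def BraidMonoid (n : ℕ) : Type := PresentedMonoid (braidMonoidRels (n - 1))

instance (n : ℕ) : Monoid (BraidMonoid n) := by unfold BraidMonoid; infer_instance

/-- The positive generator `σ_{i+1}` of the braid monoid (0-indexed by `i : Fin (n - 1)`). -/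
def braidMonGen (n : ℕ) (i : Fin (n - 1)) : BraidMonoid n :=
  PresentedMonoid.of (braidMonoidRels (n - 1)) i

/-!
Garside's argument. Write `u ≈ v` for equivalence of words under the braid relations. If
`a :: u ≈ b :: v`, then the word is a multiple of the lcm of `σₐ` and `σ_b` (which is `σₐ`,
`σₐσ_b` or `σₐσ_bσₐ` according as `|a - b|` is `0`, `≥ 2` or `1`), with matching cofactors. This is
proved by induction on the length of `u` and, inside it, on the rewriting sequence: when the
first step involves the first letter, the claim for the rewritten word is transported back
through a few applications of the claim for shorter words. The case `a = b` is left
cancellation. Then `σᵢσⱼw = σⱼw'` with `|i - j| = 1` gives `σⱼw = σⱼσᵢt`, and cancelling `σⱼ`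
yields `w = σᵢt`.
-/
namespace BraidWord

variable {m : ℕ}

def Far (a b : Fin m) : Prop := (a : ℕ) + 2 ≤ b ∨ (b : ℕ) + 2 ≤ a

def Adj (a b : Fin m) : Prop := (a : ℕ) + 1 = b ∨ (b : ℕ) + 1 = a

variable {a b c : Fin m}

lemma Far.symm (h : Far a b) : Far b a := Or.symm h

lemma Adj.symm (h : Adj a b) : Adj b a := Or.symm h

lemma Far.ne (h : Far a b) : a ≠ b := by rintro rfl; unfold Far at h; omega

lemma Adj.ne (h : Adj a b) : a ≠ b := by rintro rfl; unfold Adj at h; omega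

lemma Far.not_adj (h : Far a b) : ¬ Adj a b := by unfold Far at h; unfold Adj; omega

lemma Adj.not_adj_of_adj (hab : Adj a b) (hac : Adj a c) : ¬ Adj c b := by
  unfold Adj at *; omega

lemma eq_or_adj_or_far (a b : Fin m) : a = b ∨ Adj a b ∨ Far a b := by
  rcases eq_or_ne a b with h | h
  · exact .inl h
  · have : (a : ℕ) ≠ b := Fin.val_ne_of_ne h
    unfold Adj Far; omega

inductive Step : List (Fin m) → List (Fin m) → Prop
  | swap {a b : Fin m} (s : List (Fin m)) : Far a b → Step (a :: b :: s) (b :: a :: s)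
  | braid {a b : Fin m} (s : List (Fin m)) : Adj a b → Step (a :: b :: a :: s) (b :: a :: b :: s)
  | cons (c : Fin m) {u v : List (Fin m)} : Step u v → Step (c :: u) (c :: v)

abbrev Eqv : List (Fin m) → List (Fin m) → Prop := Relation.ReflTransGen Step

local infix:50 " ≈ᵇ " => Eqv

variable {u v w x : List (Fin m)}

namespace Step

lemma symm (h : Step u v) : Step v u := by
  induction h with
  | swap s h => exact swap s h.symm
  | braid s h => exact braid s h.symm
  | cons c _ ih => exact cons c ih

lemma length_eq (h : Step u v) : u.length = v.length := by
  induction h <;> simp_all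

lemma append_right (w : List (Fin m)) (h : Step u v) : Step (u ++ w) (v ++ w) := by
  induction h with
  | swap s h => exact swap (s ++ w) h
  | braid s h => exact braid (s ++ w) h
  | cons c _ ih => exact cons c ih

lemma append_left (w : List (Fin m)) (h : Step u v) : Step (w ++ u) (w ++ v) := by
  induction w with
  | nil => exact h
  | cons c w ih => exact cons c ih

end Step

namespace Eqv

lemma symm (h : u ≈ᵇ v) : v ≈ᵇ u := by
  induction h with
  | refl => rfl
  | tail _ h ih => exact (Relation.ReflTransGen.single h.symm).trans ih

lemma length_eq (h : u ≈ᵇ v) : u.length = v.length := by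
  induction h with
  | refl => rfl
  | tail _ h ih => exact ih.trans h.length_eq

lemma cons (c : Fin m) (h : u ≈ᵇ v) : c :: u ≈ᵇ c :: v :=
  Relation.ReflTransGen.lift (c :: ·) (fun _ _ => Step.cons c) _ _ h

lemma append (h₁ : u ≈ᵇ v) (h₂ : w ≈ᵇ x) : u ++ w ≈ᵇ v ++ x :=
  (Relation.ReflTransGen.lift (· ++ w) (fun _ _ => Step.append_right w) _ _ h₁).trans
    (Relation.ReflTransGen.lift (v ++ ·) (fun _ _ => Step.append_left v) _ _ h₂)

lemma swap (h : Far a b) (s : List (Fin m)) : a :: b :: s ≈ᵇ b :: a :: s := .single (.swap s h)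

lemma braid (h : Adj a b) (s : List (Fin m)) : a :: b :: a :: s ≈ᵇ b :: a :: b :: s :=
  .single (.braid s h)

end Eqv

structure FactorsThroughLcm (a b : Fin m) (u v : List (Fin m)) : Prop where
  eqv_of_eq : a = b → u ≈ᵇ v
  exists_of_far : Far a b → ∃ t, u ≈ᵇ b :: t ∧ v ≈ᵇ a :: t
  exists_of_adj : Adj a b → ∃ t, u ≈ᵇ b :: a :: t ∧ v ≈ᵇ a :: b :: t

def FactorsThroughLcmBelow (m n : ℕ) : Prop :=
  ∀ ⦃a b : Fin m⦄ ⦃u v : List (Fin m)⦄, u.length < n → a :: u ≈ᵇ b :: v →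
    FactorsThroughLcm a b u v

namespace FactorsThroughLcm

lemma self (a : Fin m) (u : List (Fin m)) : FactorsThroughLcm a a u u :=
  ⟨fun _ => .refl, fun h => (h.ne rfl).elim, fun h => (h.ne rfl).elim⟩

lemma of_eqv_left (huw : u ≈ᵇ w) (h : FactorsThroughLcm a b w v) : FactorsThroughLcm a b u v where
  eqv_of_eq hab := huw.trans (h.eqv_of_eq hab)
  exists_of_far hab := let ⟨t, h₁, h₂⟩ := h.exists_of_far hab; ⟨t, huw.trans h₁, h₂⟩
  exists_of_adj hab := let ⟨t, h₁, h₂⟩ := h.exists_of_adj hab; ⟨t, huw.trans h₁, h₂⟩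

lemma exists_of_swap_of_far (ih : FactorsThroughLcmBelow m (u.length + 1)) (hac : Far a c)
    (h : FactorsThroughLcm c b (a :: u) v) (hab : Far a b) :
    ∃ t, c :: u ≈ᵇ b :: t ∧ v ≈ᵇ a :: t := by
  rcases eq_or_adj_or_far c b with rfl | hcb | hcb
  · exact ⟨u, .refl, (h.eqv_of_eq rfl).symm⟩
  · obtain ⟨t₁, h₁, h₂⟩ := h.exists_of_adj hcb
    obtain ⟨s, hs₁, hs₂⟩ := (ih (by omega) h₁).exists_of_far hab
    have ht₁ : t₁.length < u.length + 1 := by grind [Eqv.length_eq, List.length_cons]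
    obtain ⟨q, hq₁, hq₂⟩ := (ih ht₁ hs₂).exists_of_far hac.symm
    refine ⟨c :: b :: q, ?_, ?_⟩
    · calc c :: u ≈ᵇ c :: b :: c :: q := Eqv.cons c (hs₁.trans (Eqv.cons b hq₂))
        _ ≈ᵇ b :: c :: b :: q := Eqv.braid hcb q
    · calc v ≈ᵇ c :: b :: a :: q := h₂.trans (Eqv.cons c (Eqv.cons b hq₁))
        _ ≈ᵇ c :: a :: b :: q := Eqv.cons c (Eqv.swap hab.symm q)
        _ ≈ᵇ a :: c :: b :: q := Eqv.swap hac.symm (b :: q)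
  · obtain ⟨t₁, h₁, h₂⟩ := h.exists_of_far hcb
    obtain ⟨s, hs₁, hs₂⟩ := (ih (by omega) h₁).exists_of_far hab
    exact ⟨c :: s, (Eqv.cons c hs₁).trans (Eqv.swap hcb s),
      h₂.trans ((Eqv.cons c hs₂).trans (Eqv.swap hac.symm s))⟩

lemma exists_of_swap_of_adj (ih : FactorsThroughLcmBelow m (u.length + 1)) (hac : Far a c)
    (h : FactorsThroughLcm c b (a :: u) v) (hab : Adj a b) :
    ∃ t, c :: u ≈ᵇ b :: a :: t ∧ v ≈ᵇ a :: b :: t := by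
  rcases eq_or_adj_or_far c b with rfl | hcb | hcb
  · exact (hac.not_adj hab).elim
  · obtain ⟨t₁, h₁, h₂⟩ := h.exists_of_adj hcb
    obtain ⟨s, hs₁, hs₂⟩ := (ih (by omega) h₁).exists_of_adj hab
    have ht₁ : t₁.length < u.length + 1 := by grind [Eqv.length_eq, List.length_cons]
    obtain ⟨q, hq₁, hq₂⟩ := (ih ht₁ hs₂).exists_of_far hac.symm
    have hs : s.length < u.length + 1 := by grind [Eqv.length_eq, List.length_cons]
    obtain ⟨p, hp₁, hp₂⟩ := (ih hs hq₂).exists_of_adj hcb.symm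
    refine ⟨c :: b :: a :: p, ?_, ?_⟩
    · calc c :: u ≈ᵇ c :: b :: a :: c :: b :: p :=
            Eqv.cons c (hs₁.trans (Eqv.cons b (Eqv.cons a hp₁)))
        _ ≈ᵇ c :: b :: c :: a :: b :: p := Eqv.cons c (Eqv.cons b (Eqv.swap hac (b :: p)))
        _ ≈ᵇ b :: c :: b :: a :: b :: p := Eqv.braid hcb (a :: b :: p)
        _ ≈ᵇ b :: c :: a :: b :: a :: p := Eqv.cons b (Eqv.cons c (Eqv.braid hab.symm p))
        _ ≈ᵇ b :: a :: c :: b :: a :: p := Eqv.cons b (Eqv.swap hac.symm (b :: a :: p))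
    · calc v ≈ᵇ c :: b :: a :: b :: c :: p :=
            h₂.trans (Eqv.cons c (Eqv.cons b (hq₁.trans (Eqv.cons a hp₂))))
        _ ≈ᵇ c :: a :: b :: a :: c :: p := Eqv.cons c (Eqv.braid hab.symm (c :: p))
        _ ≈ᵇ a :: c :: b :: a :: c :: p := Eqv.swap hac.symm (b :: a :: c :: p)
        _ ≈ᵇ a :: c :: b :: c :: a :: p :=
            Eqv.cons a (Eqv.cons c (Eqv.cons b (Eqv.swap hac p)))
        _ ≈ᵇ a :: b :: c :: b :: a :: p := Eqv.cons a (Eqv.braid hcb (a :: p))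
  · obtain ⟨t₁, h₁, h₂⟩ := h.exists_of_far hcb
    obtain ⟨s, hs₁, hs₂⟩ := (ih (by omega) h₁).exists_of_adj hab
    refine ⟨c :: s, ?_, ?_⟩
    · calc c :: u ≈ᵇ c :: b :: a :: s := Eqv.cons c hs₁
        _ ≈ᵇ b :: c :: a :: s := Eqv.swap hcb (a :: s)
        _ ≈ᵇ b :: a :: c :: s := Eqv.cons b (Eqv.swap hac.symm s)
    · calc v ≈ᵇ c :: a :: b :: s := h₂.trans (Eqv.cons c hs₂)
        _ ≈ᵇ a :: c :: b :: s := Eqv.swap hac.symm (b :: s)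
        _ ≈ᵇ a :: b :: c :: s := Eqv.cons a (Eqv.swap hcb s)

lemma of_swap (ih : FactorsThroughLcmBelow m (u.length + 1)) (hac : Far a c)
    (h : FactorsThroughLcm c b (a :: u) v) : FactorsThroughLcm a b (c :: u) v where
  eqv_of_eq := by
    rintro rfl
    obtain ⟨t, h₁, h₂⟩ := h.exists_of_far hac.symm
    exact (Eqv.cons c ((ih (by omega) h₁).eqv_of_eq rfl)).trans h₂.symm
  exists_of_far := exists_of_swap_of_far ih hac h
  exists_of_adj := exists_of_swap_of_adj ih hac h

lemma exists_of_braid_of_far (ih : FactorsThroughLcmBelow m (u.length + 2)) (hac : Adj a c)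
    (h : FactorsThroughLcm c b (a :: c :: u) v) (hab : Far a b) :
    ∃ t, c :: a :: u ≈ᵇ b :: t ∧ v ≈ᵇ a :: t := by
  rcases eq_or_adj_or_far c b with rfl | hcb | hcb
  · exact (hab.not_adj hac).elim
  · obtain ⟨t₁, h₁, h₂⟩ := h.exists_of_adj hcb
    obtain ⟨s, hs₁, hs₂⟩ := (ih (by simp) h₁).exists_of_far hab
    obtain ⟨q, hq₁, hq₂⟩ := (ih (by omega) hs₁).exists_of_adj hcb
    have ht₁ : t₁.length < u.length + 2 := by grind [Eqv.length_eq, List.length_cons]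
    obtain ⟨p, hp₁, hp₂⟩ := (ih ht₁ hs₂).exists_of_adj hac.symm
    have hbq : (b :: q).length < u.length + 2 := by grind [Eqv.length_eq, List.length_cons]
    have hqp : b :: q ≈ᵇ a :: p := (ih hbq (hq₂.symm.trans hp₂)).eqv_of_eq rfl
    have hq : q.length < u.length + 2 := by grind [Eqv.length_eq, List.length_cons]
    obtain ⟨r, hr₁, hr₂⟩ := (ih hq hqp).exists_of_far hab.symm
    refine ⟨c :: b :: a :: c :: r, ?_, ?_⟩
    · calc c :: a :: u ≈ᵇ c :: a :: b :: c :: a :: r :=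
            Eqv.cons c (Eqv.cons a (hq₁.trans (Eqv.cons b (Eqv.cons c hr₁))))
        _ ≈ᵇ c :: b :: a :: c :: a :: r := Eqv.cons c (Eqv.swap hab (c :: a :: r))
        _ ≈ᵇ c :: b :: c :: a :: c :: r := Eqv.cons c (Eqv.cons b (Eqv.braid hac r))
        _ ≈ᵇ b :: c :: b :: a :: c :: r := Eqv.braid hcb (a :: c :: r)
    · calc v ≈ᵇ c :: b :: a :: c :: b :: r :=
            h₂.trans (Eqv.cons c (Eqv.cons b (hp₁.trans (Eqv.cons a (Eqv.cons c hr₂)))))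
        _ ≈ᵇ c :: a :: b :: c :: b :: r := Eqv.cons c (Eqv.swap hab.symm (c :: b :: r))
        _ ≈ᵇ c :: a :: c :: b :: c :: r := Eqv.cons c (Eqv.cons a (Eqv.braid hcb.symm r))
        _ ≈ᵇ a :: c :: a :: b :: c :: r := Eqv.braid hac.symm (b :: c :: r)
        _ ≈ᵇ a :: c :: b :: a :: c :: r := Eqv.cons a (Eqv.cons c (Eqv.swap hab (c :: r)))
  · obtain ⟨t₁, h₁, h₂⟩ := h.exists_of_far hcb
    obtain ⟨s, hs₁, hs₂⟩ := (ih (by simp) h₁).exists_of_far hab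
    obtain ⟨q, hq₁, hq₂⟩ := (ih (by omega) hs₁).exists_of_far hcb
    refine ⟨c :: a :: q, ?_, ?_⟩
    · calc c :: a :: u ≈ᵇ c :: a :: b :: q := Eqv.cons c (Eqv.cons a hq₁)
        _ ≈ᵇ c :: b :: a :: q := Eqv.cons c (Eqv.swap hab q)
        _ ≈ᵇ b :: c :: a :: q := Eqv.swap hcb (a :: q)
    · calc v ≈ᵇ c :: a :: c :: q := h₂.trans (Eqv.cons c (hs₂.trans (Eqv.cons a hq₂)))
        _ ≈ᵇ a :: c :: a :: q := Eqv.braid hac.symm q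

lemma exists_of_braid_of_adj (ih : FactorsThroughLcmBelow m (u.length + 2)) (hac : Adj a c)
    (h : FactorsThroughLcm c b (a :: c :: u) v) (hab : Adj a b) :
    ∃ t, c :: a :: u ≈ᵇ b :: a :: t ∧ v ≈ᵇ a :: b :: t := by
  rcases eq_or_adj_or_far c b with rfl | hcb | hcb
  · exact ⟨u, .refl, (h.eqv_of_eq rfl).symm⟩
  · exact (hab.not_adj_of_adj hac hcb).elim
  · obtain ⟨t₁, h₁, h₂⟩ := h.exists_of_far hcb
    obtain ⟨s, hs₁, hs₂⟩ := (ih (by simp) h₁).exists_of_adj hab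
    obtain ⟨q, hq₁, hq₂⟩ := (ih (by omega) hs₁).exists_of_far hcb
    have hs : s.length < u.length + 2 := by grind [Eqv.length_eq, List.length_cons]
    obtain ⟨p, hp₁, hp₂⟩ := (ih hs hq₂).exists_of_adj hac
    refine ⟨c :: a :: b :: p, ?_, ?_⟩
    · calc c :: a :: u ≈ᵇ c :: a :: b :: a :: c :: p :=
            Eqv.cons c (Eqv.cons a (hq₁.trans (Eqv.cons b hp₂)))
        _ ≈ᵇ c :: b :: a :: b :: c :: p := Eqv.cons c (Eqv.braid hab (c :: p))
        _ ≈ᵇ b :: c :: a :: b :: c :: p := Eqv.swap hcb (a :: b :: c :: p)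
        _ ≈ᵇ b :: c :: a :: c :: b :: p :=
            Eqv.cons b (Eqv.cons c (Eqv.cons a (Eqv.swap hcb.symm p)))
        _ ≈ᵇ b :: a :: c :: a :: b :: p := Eqv.cons b (Eqv.braid hac.symm (b :: p))
    · calc v ≈ᵇ c :: a :: b :: c :: a :: p :=
            h₂.trans (Eqv.cons c (hs₂.trans (Eqv.cons a (Eqv.cons b hp₁))))
        _ ≈ᵇ c :: a :: c :: b :: a :: p := Eqv.cons c (Eqv.cons a (Eqv.swap hcb.symm (a :: p)))
        _ ≈ᵇ a :: c :: a :: b :: a :: p := Eqv.braid hac.symm (b :: a :: p)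
        _ ≈ᵇ a :: c :: b :: a :: b :: p := Eqv.cons a (Eqv.cons c (Eqv.braid hab p))
        _ ≈ᵇ a :: b :: c :: a :: b :: p := Eqv.cons a (Eqv.swap hcb (a :: b :: p))

lemma of_braid (ih : FactorsThroughLcmBelow m (u.length + 2)) (hac : Adj a c)
    (h : FactorsThroughLcm c b (a :: c :: u) v) : FactorsThroughLcm a b (c :: a :: u) v where
  eqv_of_eq := by
    rintro rfl
    obtain ⟨t, h₁, h₂⟩ := h.exists_of_adj hac.symm
    have hct : c :: u ≈ᵇ c :: t := (ih (by simp) h₁).eqv_of_eq rfl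
    exact (Eqv.cons c (Eqv.cons a ((ih (by omega) hct).eqv_of_eq rfl))).trans h₂.symm
  exists_of_far := exists_of_braid_of_far ih hac h
  exists_of_adj := exists_of_braid_of_adj ih hac h

lemma of_eqv_of_below {n : ℕ} (ih : FactorsThroughLcmBelow m n) {x : List (Fin m)}
    (hx : x ≈ᵇ b :: v) : ∀ {a u}, x = a :: u → u.length = n → FactorsThroughLcm a b u v := by
  induction hx using Relation.ReflTransGen.head_induction_on with
  | refl => rintro a u ⟨⟩ -; exact self b v
  | head hstep _ ihz =>
    rintro a u rfl rfl
    cases hstep with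
    | swap s hac => exact (ihz rfl (by simp)).of_swap ih hac
    | braid s hac => exact (ihz rfl (by simp)).of_braid ih hac
    | cons _ hs => exact (ihz rfl hs.length_eq.symm).of_eqv_left (.single hs)

end FactorsThroughLcm

lemma factorsThroughLcmBelow (m n : ℕ) : FactorsThroughLcmBelow m n := by
  induction n with
  | zero => intro _ _ _ _ h; simp at h
  | succ n ih =>
    intro a b u v hu h
    rcases Nat.lt_succ_iff_lt_or_eq.mp hu with hu | hu
    · exact ih hu h
    · exact FactorsThroughLcm.of_eqv_of_below ih h rfl hu

lemma FactorsThroughLcm.of_cons_eqv_cons (h : a :: u ≈ᵇ b :: v) : FactorsThroughLcm a b u v :=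
  factorsThroughLcmBelow m _ (Nat.lt_succ_self _) h

open FreeMonoid in
lemma conGen_swap (h : Far a b) : conGen (braidMonoidRels m) (of a * of b) (of b * of a) := by
  rcases h with h | h
  · exact ConGen.Rel.of _ _ ⟨a, b, .inl ⟨h, rfl, rfl⟩⟩
  · exact Con.symm _ (ConGen.Rel.of _ _ ⟨b, a, .inl ⟨h, rfl, rfl⟩⟩)

open FreeMonoid in
lemma conGen_braid (h : Adj a b) :
    conGen (braidMonoidRels m) (of a * of b * of a) (of b * of a * of b) := by
  rcases h with h | h
  · exact ConGen.Rel.of _ _ ⟨a, b, .inr ⟨h.symm, rfl, rfl⟩⟩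
  · exact Con.symm _ (ConGen.Rel.of _ _ ⟨b, a, .inr ⟨h.symm, rfl, rfl⟩⟩)

lemma Step.conGen (h : Step u v) :
    conGen (braidMonoidRels m) (FreeMonoid.ofList u) (FreeMonoid.ofList v) := by
  induction h with
  | swap s h => exact Con.mul _ (conGen_swap h) (Con.refl _ (FreeMonoid.ofList s))
  | braid s h => exact Con.mul _ (conGen_braid h) (Con.refl _ (FreeMonoid.ofList s))
  | cons c _ ih => exact Con.mul _ (Con.refl _ (FreeMonoid.of c)) ih

lemma Eqv.conGen (h : u ≈ᵇ v) :
    conGen (braidMonoidRels m) (FreeMonoid.ofList u) (FreeMonoid.ofList v) := by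
  induction h with
  | refl => exact Con.refl _ _
  | tail _ h ih => exact Con.trans _ ih h.conGen

def braidCon (m : ℕ) : Con (FreeMonoid (Fin m)) where
  r x y := x.toList ≈ᵇ y.toList
  iseqv := ⟨fun _ => .refl, Eqv.symm, .trans⟩
  mul' h₁ h₂ := Eqv.append h₁ h₂

lemma conGen_braidMonoidRels : conGen (braidMonoidRels m) = braidCon m := by
  refine le_antisymm (Con.conGen_le.mpr ?_) fun _ _ h => Eqv.conGen h
  rintro _ _ ⟨a, b, ⟨h, rfl, rfl⟩ | ⟨h, rfl, rfl⟩⟩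
  · exact Eqv.swap (.inl h) []
  · exact Eqv.braid (.inl h.symm) []

lemma mk_eq_mk_iff_eqv {x y : FreeMonoid (Fin m)} :
    PresentedMonoid.mk (braidMonoidRels m) x = PresentedMonoid.mk _ y ↔ x.toList ≈ᵇ y.toList := by
  rw [PresentedMonoid.mk_eq_mk_iff, conGen_braidMonoidRels]
  rfl

lemma of_mul_mk (a : Fin m) (x : FreeMonoid (Fin m)) :
    PresentedMonoid.of (braidMonoidRels m) a * PresentedMonoid.mk _ x =
      PresentedMonoid.mk _ (FreeMonoid.of a * x) :=
  (map_mul _ _ _).symm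

lemma of_mul_left_cancel {x y : PresentedMonoid (braidMonoidRels m)}
    (h : PresentedMonoid.of _ a * x = PresentedMonoid.of _ a * y) : x = y := by
  obtain ⟨X, rfl⟩ := PresentedMonoid.surjective_mk x
  obtain ⟨Y, rfl⟩ := PresentedMonoid.surjective_mk y
  rw [of_mul_mk, of_mul_mk, mk_eq_mk_iff_eqv] at h
  exact mk_eq_mk_iff_eqv.mpr ((FactorsThroughLcm.of_cons_eqv_cons h).eqv_of_eq rfl)

lemma exists_eq_of_mul_eq_of_mul_of_adj {x y : PresentedMonoid (braidMonoidRels m)}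
    (hab : Adj a b) (h : PresentedMonoid.of _ a * x = PresentedMonoid.of _ b * y) :
    ∃ t, x = PresentedMonoid.of _ b * PresentedMonoid.of _ a * t ∧
      y = PresentedMonoid.of _ a * PresentedMonoid.of _ b * t := by
  obtain ⟨X, rfl⟩ := PresentedMonoid.surjective_mk x
  obtain ⟨Y, rfl⟩ := PresentedMonoid.surjective_mk y
  rw [of_mul_mk, of_mul_mk, mk_eq_mk_iff_eqv] at h
  obtain ⟨t, hX, hY⟩ := (FactorsThroughLcm.of_cons_eqv_cons h).exists_of_adj hab
  refine ⟨PresentedMonoid.mk _ (FreeMonoid.ofList t), ?_, ?_⟩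
  · rw [mul_assoc, of_mul_mk, of_mul_mk, mk_eq_mk_iff_eqv]
    exact hX
  · rw [mul_assoc, of_mul_mk, of_mul_mk, mk_eq_mk_iff_eqv]
    exact hY

end BraidWord

theorem braidMonoid_left_dvd_of_left_dvd_general (n : ℕ) (i j : Fin (n - 1))
    (hij : (i : ℕ) + 1 = (j : ℕ) ∨ (j : ℕ) + 1 = (i : ℕ)) (w : BraidMonoid n)
    (h : ∃ w', braidMonGen n i * braidMonGen n j * w = braidMonGen n j * w') :
    ∃ w'', w = braidMonGen n i * w'' := by
  obtain ⟨w', hw⟩ := h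
  rw [mul_assoc] at hw
  obtain ⟨t, ht, -⟩ := BraidWord.exists_eq_of_mul_eq_of_mul_of_adj hij hw
  rw [mul_assoc] at ht
  exact ⟨t, BraidWord.of_mul_left_cancel ht⟩

/-- In the braid monoid, if `|i - j| = 1` and `σⱼ` left-divides `σᵢ σⱼ w`,
then `σᵢ` left-divides `w`. -/
theorem braidMonoid_left_dvd_of_left_dvd (n : ℕ) (hn : 2 ≤ n) (i j : Fin (n - 1))
    (hij : (i : ℕ) + 1 = (j : ℕ) ∨ (j : ℕ) + 1 = (i : ℕ)) (w : BraidMonoid n)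
    (h : ∃ w', braidMonGen n i * braidMonGen n j * w = braidMonGen n j * w') :
    ∃ w'', w = braidMonGen n i * w'' :=
  braidMonoid_left_dvd_of_left_dvd_general n i j hij w h
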